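/- Let π = a_1 a_2 ⋯ a_{n−1} be any permutation of [n−1], and let b = a_p and c = a_q (with p < q, so b < c) be two consecutive left-to-right maxima of π. Suppose a new largest letter n is inserted into π at a position strictly after position p and strictly before position q, but not immediately before c (so that the letter immediately to the right of the inserted n is one of the letters a_{p+1},…,a_{q−1}). Then the resulting permutation of [n] contains an occurrence of the dashed pattern 2-41-3; indeed b, n, the letter immediately to the right of n, and c form such an occurrence. -/

import Mathlib

/-
Common definitions: permutations of {1,…,n} as words (lists), dashed
pattern avoidance, permutation statistics, and β(1,0)-trees with their
statistics, following the paper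
"Decompositions and statistics for β(1,0)-trees and nonseparable permutations".
-/

namespace Beta10

attribute [local instance] Classical.propDecidable

/-- `l` is a permutation of `{1, …, n}` (written as a word). -/
def IsPermOf (n : ℕ) (l : List ℕ) : Prop := l.Perm (List.range' 1 n)

/-- an occurrence of the dashed pattern 3-1-4-2 at positions `i < j < k < m` -/
def occ3142 (l : List ℕ) (i j k m : ℕ) : Prop :=
  i < j ∧ j < k ∧ k < m ∧ m < l.length ∧
  l.getD j 0 < l.getD m 0 ∧ l.getD m 0 < l.getD i 0 ∧ l.getD i 0 < l.getD k 0

def pat3142 (l : List ℕ) : Prop := ∃ i j k m, occ3142 l i j k m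

/-- an occurrence of the dashed pattern 2-41-3 at positions `i < j, j+1 < k` -/
def occ2413 (l : List ℕ) (i j k : ℕ) : Prop :=
  i < j ∧ j + 1 < k ∧ k < l.length ∧
  l.getD (j+1) 0 < l.getD i 0 ∧ l.getD i 0 < l.getD k 0 ∧ l.getD k 0 < l.getD j 0

def pat2413 (l : List ℕ) : Prop := ∃ i j k, occ2413 l i j k

/-- an *avoider*: a permutation of `{1,…,n}` avoiding 3-1-4-2 and 2-41-3 -/
def Avoider (n : ℕ) (l : List ℕ) : Prop := IsPermOf n l ∧ ¬ pat3142 l ∧ ¬ pat2413 l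

/-- direct sum of permutations -/
def dsum (σ τ : List ℕ) : List ℕ := σ ++ τ.map (· + σ.length)

/-- a nonempty permutation that is not a direct sum of two nonempty permutations -/
def Indecomposable (l : List ℕ) : Prop :=
  l ≠ [] ∧ ¬ ∃ σ τ : List ℕ, σ ≠ [] ∧ τ ≠ [] ∧ l = dsum σ τ

/-- position `p` holds a left-to-right maximum of `l` -/
def IsLRMax (l : List ℕ) (p : ℕ) : Prop :=
  p < l.length ∧ ∀ j < p, l.getD j 0 < l.getD p 0

/-- position `p` holds a left-to-right minimum of `l` -/
def IsLRMin (l : List ℕ) (p : ℕ) : Prop :=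
  p < l.length ∧ ∀ j < p, l.getD p 0 < l.getD j 0

/-- position `p` holds a right-to-left maximum of `l` -/
def IsRLMax (l : List ℕ) (p : ℕ) : Prop :=
  p < l.length ∧ ∀ j < l.length, p < j → l.getD j 0 < l.getD p 0

/-- the number of left-to-right maxima -/
noncomputable def lmax (l : List ℕ) : ℕ :=
  ((Finset.range l.length).filter (fun p => IsLRMax l p)).card

/-- the number of left-to-right minima -/
noncomputable def lmin (l : List ℕ) : ℕ :=
  ((Finset.range l.length).filter (fun p => IsLRMin l p)).card

/-- the number of right-to-left maxima -/
noncomputable def rmax (l : List ℕ) : ℕ :=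
  ((Finset.range l.length).filter (fun p => IsRLMax l p)).card

/-- the number of ascents -/
noncomputable def asc (l : List ℕ) : ℕ :=
  ((Finset.range (l.length - 1)).filter (fun p => l.getD p 0 < l.getD (p+1) 0)).card

/-- the number of descents -/
noncomputable def des (l : List ℕ) : ℕ :=
  ((Finset.range (l.length - 1)).filter (fun p => l.getD (p+1) 0 < l.getD p 0)).card

/-- `ldr l` : the largest `i` with `a₁ > a₂ > ⋯ > aᵢ` (and `0` for the empty word) -/
noncomputable def ldr (l : List ℕ) : ℕ :=
  ((Finset.range (l.length + 1)).filter
    (fun i => ∀ j, j + 1 < i → l.getD (j+1) 0 < l.getD j 0)).sup id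

/-- `lir l` : the largest `i` with `a₁ < a₂ < ⋯ < aᵢ` (and `0` for the empty word) -/
noncomputable def lir (l : List ℕ) : ℕ :=
  ((Finset.range (l.length + 1)).filter
    (fun i => ∀ j, j + 1 < i → l.getD j 0 < l.getD (j+1) 0)).sup id

/-- the factor of `l` occupying positions `p, …, q-1` is a component of `l`:
it is nonempty, all letters before it are smaller, all letters after it are
larger, and it admits no nontrivial splitting `αβ` with `α ≺ β`. -/
def IsComponent (l : List ℕ) (p q : ℕ) : Prop :=
  p < q ∧ q ≤ l.length ∧
  (∀ i < p, ∀ j, p ≤ j → j < q → l.getD i 0 < l.getD j 0) ∧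
  (∀ j, p ≤ j → j < q → ∀ i, q ≤ i → i < l.length → l.getD j 0 < l.getD i 0) ∧
  ¬ ∃ r, p < r ∧ r < q ∧ ∀ i, p ≤ i → i < r → ∀ j, r ≤ j → j < q → l.getD i 0 < l.getD j 0

/-- the number of components of `l` -/
noncomputable def comp (l : List ℕ) : ℕ :=
  (((Finset.range (l.length + 1)) ×ˢ (Finset.range (l.length + 1))).filter
    (fun pq => IsComponent l pq.1 pq.2)).card

/-- insert the letter `a` into `l` so that it occupies (0-based) position `r` -/
def insertAt (l : List ℕ) (r : ℕ) (a : ℕ) : List ℕ := l.take r ++ a :: l.drop r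

/-- the (0-based) positions of the left-to-right maxima, from left to right -/
noncomputable def lrMaxPos (l : List ℕ) : List ℕ :=
  (List.range l.length).filter (fun p => decide (IsLRMax l p))

/-- the finite set of avoiders of `{1,…,n}` -/
noncomputable def avoidersFinset (n : ℕ) : Finset (List ℕ) :=
  ((List.range' 1 n).permutations.toFinset).filter (fun l => ¬ pat3142 l ∧ ¬ pat2413 l)

/-- reverse of a permutation -/
def revP (l : List ℕ) : List ℕ := l.reverse

/-- complement of a permutation of `{1,…,n}` -/
def complP (n : ℕ) (l : List ℕ) : List ℕ := l.map (fun a => n + 1 - a)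

/-- inverse of a permutation of `{1,…,n}` (as a word: the `v`-th letter is the
position of the letter `v` in `l`, 1-based) -/
def invP (l : List ℕ) : List ℕ :=
  (List.range' 1 l.length).map (fun v => l.idxOf v + 1)

/-- rooted plane trees with nodes labeled by natural numbers -/
inductive PTree : Type where
  | node : ℕ → List PTree → PTree

namespace PTree

/-- the label of the root -/
def label : PTree → ℕ | node l _ => l

/-- the list of subtrees of the root -/
def children : PTree → List PTree | node _ cs => cs

/-- the number of nodes -/
def size : PTree → ℕ
  | node _ cs => 1 + (cs.attach.map (fun x => size x.1)).sum
decreasing_by have := List.sizeOf_lt_of_mem x.2; simp at this ⊢; omega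

/-- the number of leaves -/
def leaves : PTree → ℕ
  | node _ [] => 1
  | node _ (c :: cs) => ((c :: cs).attach.map (fun x => leaves x.1)).sum
decreasing_by have := List.sizeOf_lt_of_mem x.2; simp at this ⊢; omega

/-- the number of internal (non-leaf) nodes; the root counts as internal -/
def internalN : PTree → ℕ
  | node _ [] => 0
  | node _ (c :: cs) => 1 + ((c :: cs).attach.map (fun x => internalN x.1)).sum
decreasing_by have := List.sizeOf_lt_of_mem x.2; simp at this ⊢; omega

/-- the number of children of the root -/
def subT (t : PTree) : ℕ := t.children.length

/-- the number of edges on the path from the root to the leftmost leaf -/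
def lpath : PTree → ℕ
  | node _ [] => 0
  | node _ (c :: _) => lpath c + 1

mutual
/-- the number of edges on the path from the root to the rightmost leaf -/
def rpath : PTree → ℕ
  | .node _ [] => 0
  | .node _ (c :: cs) => rpathAux c cs + 1
termination_by t => sizeOf t
def rpathAux : PTree → List PTree → ℕ
  | c, [] => rpath c
  | _, c' :: cs => rpathAux c' cs
termination_by c cs => sizeOf c + sizeOf cs
end

/-- the number of nodes with label 1, other than the root, on the path from
the root to the leftmost leaf -/
def lsub : PTree → ℕ
  | node _ [] => 0
  | node _ (c :: _) => lsub c + (if c.label = 1 then 1 else 0)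

mutual
/-- the number of nodes with label 1, other than the root, on the path from
the root to the rightmost leaf -/
def rsub : PTree → ℕ
  | .node _ [] => 0
  | .node _ (c :: cs) => rsubAux c cs
termination_by t => sizeOf t
def rsubAux : PTree → List PTree → ℕ
  | c, [] => rsub c + (if c.label = 1 then 1 else 0)
  | _, c' :: cs => rsubAux c' cs
termination_by c cs => sizeOf c + sizeOf cs
end

/-- the number of internal nodes common to the left path and the right path -/
def stem : PTree → ℕ
  | node _ [] => 0
  | node _ [c] => stem c + 1
  | node _ (_ :: _ :: _) => 1

/-- `tsum u v = u ⊕ v`: the subtrees of the root are those of `u` followed by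
those of `v`, and the root label is the sum of the root labels -/
def tsum (u v : PTree) : PTree := node (u.label + v.label) (u.children ++ v.children)

/-- `lam i t = λ(i, t)`: join a new root via an edge to the old root; both the
new root and the old root get the label `i` -/
def lam (i : ℕ) (t : PTree) : PTree := node i [node i t.children]

/-- the one-edge tree (two nodes, both labeled 1) -/
def edgeT : PTree := node 1 [node 1 []]

/-- `iterEdge k = ⊕^k edgeT`, the `k`-fold sum of one-edge trees -/
def iterEdge : ℕ → PTree
  | 0 => node 0 []
  | k + 1 => tsum edgeT (iterEdge k)

/-- does the path from the root to the leftmost leaf contain a node,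
other than the leaf itself, with label 1? -/
def leftPathOne : PTree → Bool
  | node _ [] => false
  | node l (c :: _) => (l == 1) || leftPathOne c

/-- delete the leftmost leaf and decrease by 1 the labels of all nodes on the
path from the root to it -/
def delLeft : PTree → PTree
  | node l [] => node l []
  | node l (node _ [] :: cs) => node (l - 1) cs
  | node l (c :: cs) => node (l - 1) (delLeft c :: cs)

/-- iterate: if the path from the root to the leftmost leaf contains a node
(other than that leaf) with label 1, stop and report 1 plus the number of
leaves already deleted; otherwise delete the leftmost leaf (decreasing the
labels on its path) and continue -/
def stemGo : ℕ → PTree → ℕ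
  | 0, _ => 0
  | fuel + 1, t => if leftPathOne t then 1 else 1 + stemGo fuel (delLeft t)

/-- the statistic stem′ of the paper: the index of the first leaf (from the
left) whose path to the root contains a node, other than the leaf itself,
with label 1, in the iterated leaf-deletion process -/
def stemP (t : PTree) : ℕ := stemGo t.size t

/-- the mirror image: recursively reverse the order of subtrees -/
def mirror : PTree → PTree
  | node l cs => node l ((cs.attach.map (fun x => mirror x.1)).reverse)
decreasing_by have := List.sizeOf_lt_of_mem x.2; simp at this ⊢; omega

/-- the statistic stem~ : stem′ of the mirror image -/
def stemM (t : PTree) : ℕ := stemP (mirror t)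

/-- `obs u v = u ⊘ v`: identify the rightmost leaf of `u` with the root of `v`;
the identified node gets label 1 -/
def obs : PTree → PTree → PTree
  | node _ [], v => node 1 v.children
  | node l [c], v => node l [obs c v]
  | node l (c :: c' :: cs), v => node l (c :: (obs (node l (c' :: cs)) v).children)
termination_by u _ => sizeOf u
decreasing_by all_goals (simp; try omega)

/-- validity of a non-root node of a β(1,0)-tree (together with all of its
descendants): a leaf has label 1, and any other node has a positive label
that is at most the sum of its children's labels -/
inductive IsBetaSub : PTree → Prop where
  | mk (l : ℕ) (cs : List PTree)
      (hleaf : cs = [] → l = 1)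
      (hinternal : cs ≠ [] → 1 ≤ l ∧ l ≤ (cs.map label).sum)
      (hchildren : ∀ c ∈ cs, IsBetaSub c) : IsBetaSub (node l cs)

end PTree

/-- `t` is a β(1,0)-tree: the root label equals the sum of the children's
labels, and every non-root node is valid -/
def IsBeta (t : PTree) : Prop :=
  t.label = (t.children.map PTree.label).sum ∧ ∀ c ∈ t.children, PTree.IsBetaSub c

end Beta10

namespace Beta10

section insertAt

variable (l : List ℕ) {r : ℕ} (a : ℕ)

theorem length_insertAt (h : r ≤ l.length) : (insertAt l r a).length = l.length + 1 := by
  simp [insertAt]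
  omega

theorem getD_insertAt_of_lt (h : r ≤ l.length) {i : ℕ} (hi : i < r) :
    (insertAt l r a).getD i 0 = l.getD i 0 := by
  rw [insertAt, List.getD_append _ _ _ _ (by simp; omega)]
  simp [List.getD_eq_getElem?_getD, hi]

theorem getD_insertAt_self (h : r ≤ l.length) : (insertAt l r a).getD r 0 = a := by
  rw [insertAt, List.getD_append_right _ _ _ _ (by simp [h])]
  simp [h]

theorem getD_insertAt_succ_of_le (h : r ≤ l.length) {i : ℕ} (hi : r ≤ i) :
    (insertAt l r a).getD (i + 1) 0 = l.getD i 0 := by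
  rw [insertAt, List.getD_append_right _ _ _ _ (by simp; omega),
    List.length_take_of_le h, show i + 1 - r = (i - r) + 1 by omega, List.getD_cons_succ]
  simp [List.getD_eq_getElem?_getD, Nat.add_sub_cancel' hi]

end insertAt

theorem IsPermOf.nodup {n : ℕ} {l : List ℕ} (h : IsPermOf n l) : l.Nodup :=
  h.nodup_iff.mpr List.nodup_range'

theorem IsPermOf.getD_le {n : ℕ} {l : List ℕ} (h : IsPermOf n l) {i : ℕ} (hi : i < l.length) :
    l.getD i 0 ≤ n := by
  have hmem : l.getD i 0 ∈ List.range' 1 n := h.subset (by simp [hi])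
  rw [List.mem_range'_1] at hmem
  omega

theorem getD_ne_getD_of_nodup {l : List ℕ} (hl : l.Nodup) {i j : ℕ} (hi : i < l.length)
    (hj : j < l.length) (hij : i ≠ j) : l.getD i 0 ≠ l.getD j 0 := by
  rw [List.getD_eq_getElem l 0 hi, List.getD_eq_getElem l 0 hj]
  exact fun h => hij (hl.getElem_inj_iff.mp h)

/-- If no left-to-right maximum lies in positions `p+1, …, j`, each of those letters
is dominated by a letter further left, hence (inductively) by `l_p`. -/
theorem getD_lt_getD_of_no_isLRMax_between {l : List ℕ} (hl : l.Nodup) {p j : ℕ}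
    (hp : IsLRMax l p) (hpj : p < j) (hjl : j < l.length)
    (hnone : ∀ k, p < k → k ≤ j → ¬ IsLRMax l k) : l.getD j 0 < l.getD p 0 := by
  induction j using Nat.strong_induction_on with
  | _ j ih =>
    obtain ⟨i, hij, hle⟩ : ∃ i < j, l.getD j 0 ≤ l.getD i 0 := by
      simpa [IsLRMax, hjl] using hnone j hpj le_rfl
    rcases lt_trichotomy i p with hip | rfl | hip
    · exact hle.trans_lt (hp.2 i hip)
    · exact hle.lt_of_ne (getD_ne_getD_of_nodup hl hjl (by omega) hij.ne')
    · exact hle.trans_lt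
        (ih i hij hip (by omega) fun k hpk hki => hnone k hpk (by omega))

/-- Let `l` be a permutation of `{1,…,m}` and let positions
`p < q` hold two consecutive left-to-right maxima `b = l_p` and `c = l_q`.
Inserting the new largest letter `m+1` at a position `r` strictly after `p`
and strictly before `q` (hence not immediately before `c`) creates an
occurrence of the dashed pattern 2-41-3; indeed `b`, `m+1`, the letter
immediately to the right of `m+1`, and `c` form such an occurrence. -/
theorem statement_1 (m : ℕ) (l : List ℕ) (hperm : IsPermOf m l)
    (p q : ℕ) (hpq : p < q) (hp : IsLRMax l p) (hq : IsLRMax l q)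
    (hcons : ∀ j, p < j → j < q → ¬ IsLRMax l j)
    (r : ℕ) (hr1 : p < r) (hr2 : r < q) :
    pat2413 (insertAt l r (m + 1)) ∧ occ2413 (insertAt l r (m + 1)) p r (q + 1) := by
  have hql : q < l.length := hq.1
  have hrl : r ≤ l.length := by omega
  have hocc : occ2413 (insertAt l r (m + 1)) p r (q + 1) := by
    refine ⟨hr1, by omega, by rw [length_insertAt l _ hrl]; omega, ?_, ?_, ?_⟩ <;>
      simp only [getD_insertAt_of_lt l _ hrl hr1, getD_insertAt_self l _ hrl,
        getD_insertAt_succ_of_le l _ hrl le_rfl, getD_insertAt_succ_of_le l _ hrl hr2.le]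
    · exact getD_lt_getD_of_no_isLRMax_between hperm.nodup hp hr1 (by omega)
        fun k hpk hkr => hcons k hpk (by omega)
    · exact hq.2 p hpq
    · exact Nat.lt_succ_of_le (hperm.getD_le hql)
  exact ⟨⟨p, r, q + 1, hocc⟩, hocc⟩

end Beta10
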